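/- Let λ ∈ Pℓk and z ∈ [b_λ], and set μ := λ − ε_z ∈ P̃ℓk. Then L_z g_λ^{(k)} = (1 − L_{down_{Δ^k(λ)}(z)+1}) g_μ^{(k)} + L_{down_{Δ^k(λ)}(z)} g_λ^{(k)}, where L_w applied to a K-k-Schur function acts on the third argument of its Katalan presentation and L_w := 0 for w > ℓ. -/

import Mathlib

/-!
Common framework: root ideals, Katalan functions, (generalized) K-k-Schur functions,
lowering operators, bounce paths, the sets `Ω`, and (k+1)-cores.
Vectors `γ ∈ ℤ^ℓ` are modelled as functions `ℕ → ℤ`, with the relevant indices `1,…,ℓ`.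
Symmetric-function identities are stated in `MvPolynomial (Fin N) ℚ` for every `N`.
-/

noncomputable section KkSchur

/-- Complete homogeneous symmetric polynomial of degree `d` in `N` variables over `ℚ`. -/
def hsym (N d : ℕ) : MvPolynomial (Fin N) ℚ :=
  ∑ m : Sym (Fin N) d, (m.1.map MvPolynomial.X).prod

/-- The inhomogeneous version `k_m^{(r)} = Σ_{i=0}^m C(r+i-1,i) h_{m-i}` (zero for `m < 0`). -/
def kpoly (N : ℕ) (r : ℕ) (m : ℤ) : MvPolynomial (Fin N) ℚ :=
  if m < 0 then 0
  else ∑ i ∈ Finset.range (m.toNat + 1), ((r + i - 1).choose i : ℚ) • hsym N (m.toNat - i)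

/-- `k_γ = k_{γ₁}^{(0)} ⋯ k_{γ_ℓ}^{(ℓ-1)}`. -/
def kgamma (N ℓ : ℕ) (γ : ℕ → ℤ) : MvPolynomial (Fin N) ℚ :=
  ∏ i ∈ Finset.Icc 1 ℓ, kpoly N (i - 1) (γ i)

/-- `Δ⁺_ℓ = {(i,j) : 1 ≤ i < j ≤ ℓ}`. -/
def DeltaPlus (ℓ : ℕ) : Finset (ℕ × ℕ) :=
  (Finset.Icc 1 ℓ ×ˢ Finset.Icc 1 ℓ).filter fun p => p.1 < p.2

/-- Root ideal: an upper order ideal of `Δ⁺_ℓ` for `(a,b) ≤ (c,d) ↔ a ≥ c ∧ b ≤ d`. -/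
def IsRootIdeal (ℓ : ℕ) (Ψ : Finset (ℕ × ℕ)) : Prop :=
  Ψ ⊆ DeltaPlus ℓ ∧ ∀ p ∈ Ψ, ∀ q ∈ DeltaPlus ℓ, q.1 ≤ p.1 → p.2 ≤ q.2 → q ∈ Ψ

/-- Indicator (as an integer vector) of the interval `[a,b]`. -/
def epsI (a b : ℕ) : ℕ → ℤ := fun t => if a ≤ t ∧ t ≤ b then 1 else 0

/-- Effect of the lowering operators `∏_{z ∈ T} L_z` on the index vector `γ`. -/
def shiftL (T : Multiset ℕ) (γ : ℕ → ℤ) : ℕ → ℤ := fun t => γ t - T.count t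

/-- Effect of the raising operators `∏_{(i,j) ∈ A} R_{ij}` on the index vector `γ`. -/
def shiftR (A : Finset (ℕ × ℕ)) (γ : ℕ → ℤ) : ℕ → ℤ := fun t =>
  γ t + ((A.filter fun p => p.1 = t).card : ℤ) - ((A.filter fun p => p.2 = t).card : ℤ)

/-- The Katalan function `K(Ψ; M; γ) = ∏_{z∈M}(1-L_z) ∏_{(i,j)∈Δ⁺∖Ψ}(1-R_{ij}) k_γ`,
expanded as a signed sum over sub-multisets of `M` and subsets of `Δ⁺_ℓ ∖ Ψ`. -/
def Katalan (N ℓ : ℕ) (Ψ : Finset (ℕ × ℕ)) (M : Multiset ℕ) (γ : ℕ → ℤ) :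
    MvPolynomial (Fin N) ℚ :=
  (M.powerset.map fun T =>
    ((-1 : ℚ) ^ Multiset.card T) •
      ∑ A ∈ (DeltaPlus ℓ \ Ψ).powerset,
        ((-1 : ℚ) ^ A.card) • kgamma N ℓ (shiftR A (shiftL T γ))).sum

/-- The root ideal `Δ^k(μ) = {(i,j) ∈ Δ⁺_ℓ : k - μ_i + i < j}`. -/
def DeltaK (k ℓ : ℕ) (μ : ℕ → ℤ) : Finset (ℕ × ℕ) :=
  (DeltaPlus ℓ).filter fun p => (k : ℤ) - μ p.1 + p.1 < p.2

/-- `L(R)`: the multiset of second components of `R`. -/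
def Lmul (R : Finset (ℕ × ℕ)) : Multiset ℕ := R.val.map Prod.snd

/-- The bottom `b_μ` of the root ideal `Δ^k(μ)` (0 if the root ideal is empty). -/
def bottomB (k ℓ : ℕ) (μ : ℕ → ℤ) : ℕ := (DeltaK k ℓ μ).sup Prod.fst

/-- `(x,j)` is a removable root of `Ψ`. -/
def IsRemovableAt (ℓ : ℕ) (Ψ : Finset (ℕ × ℕ)) (x j : ℕ) : Prop :=
  (x, j) ∈ Ψ ∧ IsRootIdeal ℓ (Ψ.erase (x, j))

open scoped Classical in
/-- `down_Ψ(x)`: the column of the removable root in row `x` (0 if undefined). -/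
def downF (ℓ : ℕ) (Ψ : Finset (ℕ × ℕ)) (x : ℕ) : ℕ :=
  ((Finset.Icc 1 ℓ).filter fun j => IsRemovableAt ℓ Ψ x j).sup id

open scoped Classical in
/-- `up_Ψ(x)`: the row of the removable root in column `x` (0 if undefined). -/
def upF (ℓ : ℕ) (Ψ : Finset (ℕ × ℕ)) (x : ℕ) : ℕ :=
  ((Finset.Icc 1 ℓ).filter fun j => IsRemovableAt ℓ Ψ j x).sup id

/-- `top_Ψ(x)`: the minimum vertex of the bounce path of `Ψ` containing `x`. -/
def topF (ℓ : ℕ) (Ψ : Finset (ℕ × ℕ)) (x : ℕ) : ℕ :=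
  if h : 0 < upF ℓ Ψ x ∧ upF ℓ Ψ x < x then topF ℓ Ψ (upF ℓ Ψ x) else x
termination_by x
decreasing_by exact h.2

/-- Membership in `P̃ℓk`. -/
def memPt (k ℓ : ℕ) (μ : ℕ → ℤ) : Prop :=
  (∀ i ∈ Finset.Icc 1 ℓ, μ i ≤ k) ∧ ∀ i ∈ Finset.Icc 1 (ℓ - 1), μ (i + 1) ≤ μ i + 1

/-- Membership in `Pℓk` (`k`-bounded partitions of length `ℓ`). -/
def memPk (k ℓ : ℕ) (μ : ℕ → ℤ) : Prop :=
  (∀ i ∈ Finset.Icc 1 ℓ, 0 ≤ μ i ∧ μ i ≤ k) ∧ ∀ i ∈ Finset.Icc 1 (ℓ - 1), μ (i + 1) ≤ μ i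

/-- The (generalized) K-k-Schur function `g_μ^{(k)} = K(Δ^k(μ); L(Δ^{k+1}(μ)); μ)`. -/
def gk (N k ℓ : ℕ) (μ : ℕ → ℤ) : MvPolynomial (Fin N) ℚ :=
  Katalan N ℓ (DeltaK k ℓ μ) (Lmul (DeltaK (k + 1) ℓ μ)) μ

/-- `L_w g_μ^{(k)} = K(Δ^k(μ); L(Δ^{k+1}(μ)); μ - ε_w)`, with `L_w = 0` for `w > ℓ`. -/
def Lg (N k ℓ : ℕ) (w : ℕ) (μ : ℕ → ℤ) : MvPolynomial (Fin N) ℚ :=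
  if w ≤ ℓ then
    Katalan N ℓ (DeltaK k ℓ μ) (Lmul (DeltaK (k + 1) ℓ μ))
      (fun t => μ t - if t = w then 1 else 0)
  else 0

open scoped Classical in
/-- `(∏_{w ∈ S} L_w) g_μ^{(k)}`, with the convention `L_w = 0` for `w > ℓ`. -/
def LgM (N k ℓ : ℕ) (S : Multiset ℕ) (μ : ℕ → ℤ) : MvPolynomial (Fin N) ℚ :=
  if ∀ w ∈ S, w ≤ ℓ then
    Katalan N ℓ (DeltaK k ℓ μ) (Lmul (DeltaK (k + 1) ℓ μ)) (fun t => μ t - S.count t)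
  else 0

/-- The chain conditions (10) defining `h_{μ,z}` (Definition 3.4). -/
def hcond (k ℓ : ℕ) (μ : ℕ → ℤ) (z h : ℕ) : Prop :=
  (∀ t, 1 ≤ t → t ≤ h → μ (z + t) = μ z + 1) ∧
  (∀ c, 1 ≤ c → (upF ℓ (DeltaK k ℓ μ))^[c] z ≠ 0 →
    ∀ t ≤ h, μ ((upF ℓ (DeltaK k ℓ μ))^[c] (z + t)) = μ ((upF ℓ (DeltaK k ℓ μ))^[c] z)) ∧
  (∀ t, 1 ≤ t → t ≤ h →
    μ (upF ℓ (DeltaK k ℓ μ) (topF ℓ (DeltaK k ℓ μ) z + t)) =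
      μ (upF ℓ (DeltaK k ℓ μ) (topF ℓ (DeltaK k ℓ μ) z + 1)))

open scoped Classical in
/-- `h_{μ,z}` of Definition 3.4. -/
def hval (k ℓ : ℕ) (μ : ℕ → ℤ) (z : ℕ) : ℕ :=
  if z = ℓ ∨ μ (z + 1) ≤ μ z then 0
  else ((Finset.Icc 1 (ℓ - z)).filter fun h => hcond k ℓ μ z h).sup id

/-- `cover_{z,i}(μ) = μ + ε_{[up(y+1), up(y+i)]} - ε_{[z+1,z+i]}` where `y = top_{Δ^k(μ)}(z)`. -/
def coverzi (k ℓ : ℕ) (μ : ℕ → ℤ) (z i : ℕ) : ℕ → ℤ :=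
  if i = 0 then μ
  else fun t =>
    μ t +
      epsI (upF ℓ (DeltaK k ℓ μ) (topF ℓ (DeltaK k ℓ μ) z + 1))
        (upF ℓ (DeltaK k ℓ μ) (topF ℓ (DeltaK k ℓ μ) z + i)) t -
      epsI (z + 1) (z + i) t

/-- `cover_z(μ) = cover_{z,h_{μ,z}}(μ)`. -/
def coverz (k ℓ : ℕ) (μ : ℕ → ℤ) (z : ℕ) : ℕ → ℤ := coverzi k ℓ μ z (hval k ℓ μ z)

open scoped Classical in
/-- `h′`: the largest `h ∈ [0, ℓ-z]` with `μ_z + 1 = μ_{z+1} = ⋯ = μ_{z+h}`. -/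
def hprime (ℓ : ℕ) (μ : ℕ → ℤ) (z : ℕ) : ℕ :=
  ((Finset.Icc 0 (ℓ - z)).filter fun h => ∀ t, 1 ≤ t → t ≤ h → μ (z + t) = μ z + 1).sup id

/-- `μ_j = μ + σ - ε_{[z+1, z_j]}`, the partial vector in the recursive choice of quadruples. -/
def stepMu (μ σ : ℕ → ℤ) (z zj : ℕ) : ℕ → ℤ := fun t => μ t + σ t - epsI (z + 1) zj t

/-- Valid sequences of quadruples `(z_j, Ψ_j, y_j, i_j)` in the definition of `Ω_{λ,z,d}`:
`ValidSeq k ℓ μ z d σ lo` means `σ` is the accumulated sum of the interval vectors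
`ε_{[up_{Ψ_j}(y_j+1), up_{Ψ_j}(y_j+i_j)]}` and `lo` is the lower bound `z_j + i_j + 1`
for the next choice. -/
inductive ValidSeq (k ℓ : ℕ) (μ : ℕ → ℤ) (z d : ℕ) : (ℕ → ℤ) → ℕ → Prop where
  | nil : ValidSeq k ℓ μ z d (fun _ => 0) z
  | cons (σ : ℕ → ℤ) (lo zj ij : ℕ) :
      ValidSeq k ℓ μ z d σ lo →
      lo ≤ zj → zj + 1 ≤ z + d →
      memPt k ℓ (stepMu μ σ z zj) →
      topF ℓ (DeltaK k ℓ (stepMu μ σ z zj)) (zj + 1) <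
        topF ℓ (DeltaK k ℓ (stepMu μ σ z zj)) zj →
      1 ≤ ij → ij ≤ hval k ℓ (stepMu μ σ z zj) zj → ij ≤ d - zj →
      upF ℓ (DeltaK k ℓ (stepMu μ σ z zj))
          (topF ℓ (DeltaK k ℓ (stepMu μ σ z zj)) zj + ij) < topF ℓ (DeltaK k ℓ μ) z →
      ValidSeq k ℓ μ z d
        (fun t => σ t +
          epsI (upF ℓ (DeltaK k ℓ (stepMu μ σ z zj))
                  (topF ℓ (DeltaK k ℓ (stepMu μ σ z zj)) zj + 1))
               (upF ℓ (DeltaK k ℓ (stepMu μ σ z zj))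
                  (topF ℓ (DeltaK k ℓ (stepMu μ σ z zj)) zj + ij)) t)
        (zj + ij + 1)

/-- Membership in `Ω_{λ,z,d}`. -/
def OmegaMem (k ℓ : ℕ) (lam : ℕ → ℤ) (z d : ℕ) (ν : ℕ → ℤ) : Prop :=
  ∃ σ lo, ValidSeq k ℓ (fun t => lam t - if t = z then 1 else 0) z d σ lo ∧
    memPt k ℓ ν ∧
    ν = fun t => (lam t - if t = z then 1 else 0) + σ t - epsI (z + 1) (z + d) t

/-- Membership in `Ω_{λ,z} = Ω_{λ,z,h′}`. -/
def OmegaZ (k ℓ : ℕ) (lam : ℕ → ℤ) (z : ℕ) (ν : ℕ → ℤ) : Prop :=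
  OmegaMem k ℓ lam z (hprime ℓ (fun t => lam t - if t = z then 1 else 0) z) ν

/-- Membership in `Ω_{λ,{z}ⁿ}` (iterated `Ω_{·,z}`). -/
def OmegaPow (k ℓ z : ℕ) : ℕ → (ℕ → ℤ) → (ℕ → ℤ) → Prop
  | 0, lam, ν => ν = lam
  | n + 1, lam, ν => ∃ ν', OmegaZ k ℓ lam z ν' ∧ OmegaPow k ℓ z n ν' ν

/-- `D_{Δ^k(λ)} = {down_{Δ^k(λ)}(z) : z ∈ [b_λ]}`. -/
def Dset (k ℓ : ℕ) (lam : ℕ → ℤ) : Finset ℕ :=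
  (Finset.Icc 1 (bottomB k ℓ lam)).image fun z => downF ℓ (DeltaK k ℓ lam) z

/-- `[ℓ]_λ = [ℓ] ∖ D_{Δ^k(λ)}`. -/
def ellSet (k ℓ : ℕ) (lam : ℕ → ℤ) : Finset ℕ := Finset.Icc 1 ℓ \ Dset k ℓ lam

/-- Partitions as weakly decreasing, eventually zero functions on `{1,2,…}`. -/
def IsPartF (κ : ℕ → ℕ) : Prop :=
  (∀ i, 1 ≤ i → κ (i + 1) ≤ κ i) ∧ ∃ n, ∀ i, n < i → κ i = 0

/-- Hook length of the cell `(i,j)` of the partition `κ`. -/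
def hookLen (κ : ℕ → ℕ) (i j : ℕ) : ℕ :=
  (κ i + 1 - j) + Set.ncard {r : ℕ | i < r ∧ j ≤ κ r}

/-- `κ` is a `c`-core. -/
def IsCore (c : ℕ) (κ : ℕ → ℕ) : Prop :=
  IsPartF κ ∧ ∀ i j, 1 ≤ i → 1 ≤ j → j ≤ κ i → hookLen κ i j ≠ c

/-- The bijection `𝔭` from `(k+1)`-cores to `k`-bounded partitions:
`𝔭(κ)_i` counts the cells of row `i` of `κ` with hook length at most `k`. -/
def pCore (k : ℕ) (κ : ℕ → ℕ) (i : ℕ) : ℕ :=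
  Set.ncard {j : ℕ | 1 ≤ j ∧ j ≤ κ i ∧ hookLen κ i j ≤ k}

/-- `κ` is the `(k+1)`-core `𝔠(μ)` of the `k`-bounded partition `μ` of length `≤ ℓ`. -/
def IsCoreOf (k ℓ : ℕ) (κ : ℕ → ℕ) (μ : ℕ → ℤ) : Prop :=
  IsCore (k + 1) κ ∧ ∀ i, 1 ≤ i → (pCore k κ i : ℤ) = if i ≤ ℓ then μ i else 0

/-- `𝔠(μ) ⊆ 𝔠(λ)`, i.e. `w_μ ≤ w_λ` in Bruhat order. -/
def coreLE (k ℓ : ℕ) (μ lam : ℕ → ℤ) : Prop :=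
  ∃ κ1 κ2, IsCoreOf k ℓ κ1 μ ∧ IsCoreOf k ℓ κ2 lam ∧ ∀ i, κ1 i ≤ κ2 i

/-- `𝔠(μ) ⊊ 𝔠(λ)`, i.e. `w_μ < w_λ` in Bruhat order. -/
def coreLT (k ℓ : ℕ) (μ lam : ℕ → ℤ) : Prop :=
  ∃ κ1 κ2, IsCoreOf k ℓ κ1 μ ∧ IsCoreOf k ℓ κ2 lam ∧ (∀ i, κ1 i ≤ κ2 i) ∧ κ1 ≠ κ2

/-!
With `d = k - λ_z + z + 1`, lowering `λ` in a row `z ≤ b_λ` removes the root `(z, d)` from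
`Δ^k(λ)` and, when `d < ℓ`, the root `(z, d + 1)` from `Δ^{k+1}(λ)`; nothing else changes.
The root `(z, d)` is the removable root of row `z`, so `d = down(z)`. In the Katalan
presentation, removing `(z, d)` from `Ψ` contributes a factor `1 - R_{zd}` and removing `d + 1`
from `M` a factor `1 - L_{d+1}`; since `R_{zd} L_z = L_d`, the identity follows.
-/

section KatalanAlgebra

lemma mem_deltaPlus {ℓ : ℕ} {p : ℕ × ℕ} :
    p ∈ DeltaPlus ℓ ↔ 1 ≤ p.1 ∧ p.1 < p.2 ∧ p.2 ≤ ℓ := by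
  simp only [DeltaPlus, Finset.mem_filter, Finset.mem_product, Finset.mem_Icc]
  omega

lemma mem_deltaK {k ℓ : ℕ} {μ : ℕ → ℤ} {p : ℕ × ℕ} :
    p ∈ DeltaK k ℓ μ ↔ (1 ≤ p.1 ∧ p.1 < p.2 ∧ p.2 ≤ ℓ) ∧ (k : ℤ) - μ p.1 + p.1 < p.2 := by
  simp only [DeltaK, Finset.mem_filter, mem_deltaPlus]

lemma deltaK_subset {k ℓ : ℕ} {μ : ℕ → ℤ} : DeltaK k ℓ μ ⊆ DeltaPlus ℓ :=
  Finset.filter_subset _ _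

lemma shiftL_cons (a : ℕ) (T : Multiset ℕ) (γ : ℕ → ℤ) :
    shiftL (a ::ₘ T) γ = shiftL T (fun t => γ t - if t = a then 1 else 0) := by
  funext t
  simp only [shiftL, Multiset.count_cons]
  split_ifs <;> push_cast <;> ring

lemma shiftL_add (T : Multiset ℕ) (γ δ : ℕ → ℤ) :
    shiftL T (fun t => γ t + δ t) = fun t => shiftL T γ t + δ t := by
  funext t
  simp only [shiftL]
  ring

lemma card_filter_insert_eq {α : Type*} [DecidableEq α] {A : Finset α} {a : α} (ha : a ∉ A)
    (P : α → Prop) [DecidablePred P] :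
    ((insert a A).filter P).card = (A.filter P).card + if P a then 1 else 0 := by
  rw [Finset.filter_insert]
  split_ifs
  · exact Finset.card_insert_of_notMem fun h => ha (Finset.mem_filter.mp h).1
  · rfl

lemma shiftR_insert {x j : ℕ} {A : Finset (ℕ × ℕ)} (hα : (x, j) ∉ A) (γ : ℕ → ℤ) :
    shiftR (insert (x, j) A) γ =
      shiftR A (fun t => γ t + ((if t = x then 1 else 0) - (if t = j then 1 else 0))) := by
  funext t
  simp only [shiftR, card_filter_insert_eq hα]
  by_cases hx : x = t <;> by_cases hj : j = t <;> simp [hx, hj, eq_comm] <;> ring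

lemma katalan_cons (N ℓ : ℕ) (Ψ : Finset (ℕ × ℕ)) (a : ℕ) (M : Multiset ℕ) (γ : ℕ → ℤ) :
    Katalan N ℓ Ψ (a ::ₘ M) γ =
      Katalan N ℓ Ψ M γ - Katalan N ℓ Ψ M (fun t => γ t - if t = a then 1 else 0) := by
  rw [Katalan, Multiset.powerset_cons, Multiset.map_add, Multiset.sum_add, Multiset.map_map,
    sub_eq_add_neg]
  congr 1
  rw [Katalan, ← Multiset.sum_map_neg]
  refine congrArg Multiset.sum (Multiset.map_congr rfl fun T _ => ?_)
  simp only [Function.comp_apply, Multiset.card_cons, shiftL_cons, pow_succ, mul_neg_one,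
    neg_smul]

lemma katalan_erase (N ℓ : ℕ) {Ψ : Finset (ℕ × ℕ)} (M : Multiset ℕ) (γ : ℕ → ℤ)
    {x j : ℕ} (hΔ : (x, j) ∈ DeltaPlus ℓ) (hΨ : (x, j) ∈ Ψ) :
    Katalan N ℓ (Ψ.erase (x, j)) M γ =
      Katalan N ℓ Ψ M γ -
      Katalan N ℓ Ψ M
        (fun t => γ t + ((if t = x then 1 else 0) - (if t = j then 1 else 0))) := by
  classical
  have hα : (x, j) ∉ DeltaPlus ℓ \ Ψ := fun h => (Finset.mem_sdiff.mp h).2 hΨ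
  rw [Katalan, Katalan, Katalan, Finset.sdiff_erase hΔ, ← Multiset.sum_map_sub]
  refine congrArg Multiset.sum (Multiset.map_congr rfl fun T _ => ?_)
  rw [← smul_sub, Finset.sum_powerset_insert hα, sub_eq_add_neg, ← Finset.sum_neg_distrib]
  refine congrArg _ (congrArg _ (Finset.sum_congr rfl fun A hA => ?_))
  have hαA : (x, j) ∉ A := fun h => hα (Finset.mem_powerset.mp hA h)
  rw [Finset.card_insert_of_notMem hαA, shiftR_insert hαA, shiftL_add, pow_succ, mul_neg_one,
    neg_smul]

lemma lmul_eq_cons_erase {R : Finset (ℕ × ℕ)} {α : ℕ × ℕ} (hα : α ∈ R) :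
    Lmul R = α.2 ::ₘ Lmul (R.erase α) := by
  rw [Lmul, Lmul, Finset.erase_val, ← Multiset.map_cons, Multiset.cons_erase hα]

end KatalanAlgebra

section DeltaK

variable {k ℓ : ℕ} {μ : ℕ → ℤ}

lemma sub_le_sub_of_succ_le_add_one (hμ : ∀ i ∈ Finset.Icc 1 (ℓ - 1), μ (i + 1) ≤ μ i + 1)
    {i j : ℕ} (hi : 1 ≤ i) (hij : i ≤ j) (hj : j ≤ ℓ) : μ j - j ≤ μ i - i := by
  induction j, hij using Nat.le_induction with
  | base => exact le_rfl
  | succ j hij ih =>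
    have := hμ j (Finset.mem_Icc.mpr ⟨by omega, by omega⟩)
    have := ih (by omega)
    push_cast
    linarith

lemma isRootIdeal_deltaK (hμ : ∀ i ∈ Finset.Icc 1 (ℓ - 1), μ (i + 1) ≤ μ i + 1) :
    IsRootIdeal ℓ (DeltaK k ℓ μ) := by
  refine ⟨deltaK_subset, fun p hp q hq hqp hpq => ?_⟩
  obtain ⟨⟨hp1, hp2, hp3⟩, hpk⟩ := mem_deltaK.mp hp
  obtain ⟨hq1, hq2, hq3⟩ := mem_deltaPlus.mp hq
  have := sub_le_sub_of_succ_le_add_one hμ hq1 hqp (by omega)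
  exact mem_deltaK.mpr ⟨⟨hq1, hq2, hq3⟩, by omega⟩

lemma exists_mem_deltaK_of_le_bottomB {z : ℕ} (hz : 1 ≤ z) (hzb : z ≤ bottomB k ℓ μ) :
    ∃ p ∈ DeltaK k ℓ μ, z ≤ p.1 :=
  (Finset.le_sup_iff (show ⊥ < z from hz)).mp hzb

lemma lt_of_le_bottomB {z : ℕ} (hz : 1 ≤ z) (hzb : z ≤ bottomB k ℓ μ) : z < ℓ := by
  obtain ⟨p, hp, hzp⟩ := exists_mem_deltaK_of_le_bottomB hz hzb
  have := (mem_deltaK.mp hp).1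
  omega

lemma mem_deltaK_of_le_bottomB (hμ : ∀ i ∈ Finset.Icc 1 (ℓ - 1), μ (i + 1) ≤ μ i + 1)
    {z d : ℕ} (hz : 1 ≤ z) (hzb : z ≤ bottomB k ℓ μ) (hzk : μ z ≤ k)
    (hd : (d : ℤ) = k - μ z + z + 1) : (z, d) ∈ DeltaK k ℓ μ := by
  obtain ⟨p, hp, hzp⟩ := exists_mem_deltaK_of_le_bottomB hz hzb
  obtain ⟨⟨hp1, hp2, hp3⟩, hpk⟩ := mem_deltaK.mp hp
  have := sub_le_sub_of_succ_le_add_one hμ hz hzp (by omega)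
  exact mem_deltaK.mpr ⟨⟨hz, by omega, by omega⟩, by simp only; omega⟩

lemma deltaK_lower_eq_erase {z d : ℕ} (hd : (d : ℤ) = k - μ z + z + 1) :
    DeltaK k ℓ (fun t => μ t - if t = z then 1 else 0) = (DeltaK k ℓ μ).erase (z, d) := by
  ext ⟨i, j⟩
  simp only [Finset.mem_erase, mem_deltaK, ne_eq, Prod.mk.injEq]
  by_cases hi : i = z
  · subst hi
    simp only [↓reduceIte, true_and]
    omega
  · simp [hi]

end DeltaK

lemma IsRemovableAt.eq_of_mem_of_le {ℓ : ℕ} {Ψ : Finset (ℕ × ℕ)} {x j j' : ℕ}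
    (h : IsRemovableAt ℓ Ψ x j) (hj : (x, j) ∈ DeltaPlus ℓ) (hj' : (x, j') ∈ Ψ) (hle : j' ≤ j) :
    j' = j := by
  by_contra hne
  have hmem : (x, j') ∈ Ψ.erase (x, j) := Finset.mem_erase.mpr ⟨by simpa using hne, hj'⟩
  exact Finset.notMem_erase (x, j) Ψ (h.2.2 _ hmem _ hj le_rfl hle)

lemma downF_eq_of_isRemovableAt {ℓ : ℕ} {Ψ : Finset (ℕ × ℕ)} (hΨ : Ψ ⊆ DeltaPlus ℓ)
    {x j : ℕ} (h : IsRemovableAt ℓ Ψ x j) : downF ℓ Ψ x = j := by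
  classical
  have hj := mem_deltaPlus.mp (hΨ h.1)
  have hfilter : (Finset.Icc 1 ℓ).filter (fun j' => IsRemovableAt ℓ Ψ x j') = {j} := by
    ext j'
    simp only [Finset.mem_filter, Finset.mem_Icc, Finset.mem_singleton]
    refine ⟨fun ⟨_, h'⟩ => ?_, fun e => e ▸ ⟨⟨by omega, hj.2.2⟩, h⟩⟩
    rcases le_total j' j with hle | hle
    · exact h.eq_of_mem_of_le (hΨ h.1) h'.1 hle
    · exact (h'.eq_of_mem_of_le (hΨ h'.1) h.1 hle).symm
  rw [downF, hfilter, Finset.sup_singleton, id]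

lemma memPk.succ_le_add_one {k ℓ : ℕ} {lam : ℕ → ℤ} (hlam : memPk k ℓ lam) :
    ∀ i ∈ Finset.Icc 1 (ℓ - 1), lam (i + 1) ≤ lam i + 1 :=
  fun i hi => (hlam.2 i hi).trans (le_add_of_nonneg_right zero_le_one)

lemma memPk.lower_succ_le_add_one {k ℓ : ℕ} {lam : ℕ → ℤ} (hlam : memPk k ℓ lam) (z : ℕ) :
    ∀ i ∈ Finset.Icc 1 (ℓ - 1),
      lam (i + 1) - (if i + 1 = z then 1 else 0) ≤ lam i - (if i = z then 1 else 0) + 1 := by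
  intro i hi
  have := hlam.2 i hi
  split_ifs <;> omega

lemma lg_of_le {N k ℓ w : ℕ} {μ : ℕ → ℤ} (hw : w ≤ ℓ) :
    Lg N k ℓ w μ = Katalan N ℓ (DeltaK k ℓ μ) (Lmul (DeltaK (k + 1) ℓ μ))
      (fun t => μ t - if t = w then 1 else 0) :=
  if_pos hw

lemma katalan_lmul_deltaK_succ_eq_gk_sub_lg (N : ℕ) {k ℓ : ℕ} {lam : ℕ → ℤ} {z d : ℕ}
    (hz : 1 ≤ z) (hzd : z < d) (hd : (d : ℤ) = k - lam z + z + 1) :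
    Katalan N ℓ (DeltaK k ℓ (fun t => lam t - if t = z then 1 else 0))
        (Lmul (DeltaK (k + 1) ℓ lam)) (fun t => lam t - if t = z then 1 else 0) =
      gk N k ℓ (fun t => lam t - if t = z then 1 else 0) -
        Lg N k ℓ (d + 1) (fun t => lam t - if t = z then 1 else 0) := by
  have hΔ₁ : DeltaK (k + 1) ℓ (fun t => lam t - if t = z then 1 else 0) =
      (DeltaK (k + 1) ℓ lam).erase (z, d + 1) :=
    deltaK_lower_eq_erase (by push_cast; omega)
  by_cases h : (z, d + 1) ∈ DeltaK (k + 1) ℓ lam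
  · rw [lmul_eq_cons_erase h, ← hΔ₁, katalan_cons, gk, lg_of_le (mem_deltaK.mp h).1.2.2]
  · have hℓd : ℓ < d + 1 := by
      by_contra! hle
      exact h (mem_deltaK.mpr ⟨⟨hz, by omega, hle⟩, by push_cast; omega⟩)
    rw [Finset.erase_eq_of_notMem h] at hΔ₁
    rw [gk, Lg, if_neg (by omega), hΔ₁, sub_zero]

theorem stmt7_general (k ℓ : ℕ) (lam : ℕ → ℤ) (hlam : memPk k ℓ lam)
    (z : ℕ) (hz1 : 1 ≤ z) (hz2 : z ≤ bottomB k ℓ lam) (N : ℕ) :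
    Lg N k ℓ z lam =
      (gk N k ℓ (fun t => lam t - if t = z then 1 else 0) -
        Lg N k ℓ (downF ℓ (DeltaK k ℓ lam) z + 1)
          (fun t => lam t - if t = z then 1 else 0)) +
      Lg N k ℓ (downF ℓ (DeltaK k ℓ lam) z) lam := by
  have hzℓ : z < ℓ := lt_of_le_bottomB hz1 hz2
  have hzk : lam z ≤ k := (hlam.1 z (Finset.mem_Icc.mpr ⟨hz1, hzℓ.le⟩)).2
  obtain ⟨d, hd⟩ : ∃ d : ℕ, (d : ℤ) = k - lam z + z + 1 :=
    ⟨(k - lam z + z + 1).toNat, Int.toNat_of_nonneg (by omega)⟩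
  have hzd : (z, d) ∈ DeltaK k ℓ lam :=
    mem_deltaK_of_le_bottomB hlam.succ_le_add_one hz1 hz2 hzk hd
  have hΔ := deltaK_lower_eq_erase (k := k) (ℓ := ℓ) hd
  have hdown : downF ℓ (DeltaK k ℓ lam) z = d :=
    downF_eq_of_isRemovableAt deltaK_subset
      ⟨hzd, hΔ ▸ isRootIdeal_deltaK (hlam.lower_succ_le_add_one z)⟩
  have hshift : (fun t => (lam t - if t = z then 1 else 0) +
      ((if t = z then 1 else 0) - if t = d then 1 else 0)) =
      fun t => lam t - if t = d then 1 else 0 := by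
    funext t
    ring
  rw [hdown, lg_of_le hzℓ.le, lg_of_le (mem_deltaK.mp hzd).1.2.2,
    ← katalan_lmul_deltaK_succ_eq_gk_sub_lg N hz1 (mem_deltaK.mp hzd).1.2.1 hd, hΔ,
    katalan_erase N ℓ _ _ (deltaK_subset hzd) hzd, hshift]
  ring

/-- Proposition 3.9: for `λ ∈ Pℓk`, `z ∈ [b_λ]` and `μ = λ - ε_z`,
`L_z g_λ^{(k)} = (1 - L_{down(z)+1}) g_μ^{(k)} + L_{down(z)} g_λ^{(k)}`. -/
theorem stmt7 (k ℓ : ℕ) (hℓ : 1 ≤ ℓ) (lam : ℕ → ℤ) (hlam : memPk k ℓ lam)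
    (z : ℕ) (hz1 : 1 ≤ z) (hz2 : z ≤ bottomB k ℓ lam) (N : ℕ) :
    Lg N k ℓ z lam =
      (gk N k ℓ (fun t => lam t - if t = z then 1 else 0) -
        Lg N k ℓ (downF ℓ (DeltaK k ℓ lam) z + 1)
          (fun t => lam t - if t = z then 1 else 0)) +
      Lg N k ℓ (downF ℓ (DeltaK k ℓ lam) z) lam :=
  stmt7_general k ℓ lam hlam z hz1 hz2 N

end KkSchur
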